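/- Let G be a (possibly infinite) graph and T ⊆ V(G) such that there is no X ⊆ V(G)∖T with d_G(X) an odd natural number, and let P be a T-path in G. Then the graph G − E(P) obtained by deleting the edges of P also has no X ⊆ V(G)∖T with d_{G−E(P)}(X) an odd natural number. -/

import Mathlib

/-!
Common definitions: multigraphs (parallel edges allowed, no loops), walks,
paths, cuts, waves and related notions used in the statements below.
-/

universe u v

/-- A multigraph with vertex type `V` and edge type `E`: every edge is assigned
an unordered pair of *distinct* end-vertices (parallel edges allowed, no loops). -/
structure Multigraph (V : Type u) (E : Type v) : Type (max u v) where
  inc : E → Sym2 V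
  not_isDiag : ∀ e, ¬ (inc e).IsDiag

namespace Multigraph

variable {V : Type u} {E : Type v}

/-- Walks in a multigraph, recorded together with the edges they traverse. -/
inductive Walk (G : Multigraph V E) : V → V → Type (max u v)
  | nil (v : V) : Walk G v v
  | cons {u v w : V} (e : E) (he : G.inc e = s(u, v)) (p : Walk G v w) : Walk G u w

namespace Walk

variable {G : Multigraph V E}

/-- The list of vertices visited by a walk. -/
def support : ∀ {u w : V}, G.Walk u w → List V
  | _, _, .nil v => [v]
  | u, _, .cons _ _ p => u :: p.support

/-- The list of edges traversed by a walk. -/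
def edges : ∀ {u w : V}, G.Walk u w → List E
  | _, _, .nil _ => []
  | _, _, .cons e _ p => e :: p.edges

end Walk

/-- `δ_G(v)`: the set of edges incident with the vertex `v`. -/
def inci (G : Multigraph V E) (v : V) : Set E := {e | v ∈ G.inc e}

/-- `δ_G(X)`: the set of edges with exactly one end-vertex in `X`. -/
def cut (G : Multigraph V E) (X : Set V) : Set E :=
  {e | ∃ x y, G.inc e = s(x, y) ∧ x ∈ X ∧ y ∉ X}

/-- Connectedness of a multigraph. -/
def Connected (G : Multigraph V E) : Prop := ∀ u v : V, Nonempty (G.Walk u v)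

/-- A `T`-path: a path connecting two distinct vertices of `T`
with no internal vertex in `T`. -/
structure TPath (G : Multigraph V E) (T : Set V) : Type (max u v) where
  first : V
  last : V
  walk : G.Walk first last
  first_mem : first ∈ T
  last_mem : last ∈ T
  ne : first ≠ last
  support_nodup : walk.support.Nodup
  internal : ∀ x ∈ walk.support, x ∈ T → x = first ∨ x = last

/-- A system of pairwise edge-disjoint `T`-paths. -/
def TPathDisjoint (G : Multigraph V E) {T : Set V} (P : Set (G.TPath T)) : Prop :=
  ∀ p ∈ P, ∀ q ∈ P, p ≠ q → ∀ e, e ∈ p.walk.edges → e ∉ q.walk.edges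

/-- An `st`-path: a path from `s` to `t` (no internal vertex is `s` or `t`,
which is automatic as the vertices of a path are distinct). -/
structure STPath (G : Multigraph V E) (s t : V) : Type (max u v) where
  walk : G.Walk s t
  support_nodup : walk.support.Nodup

/-- A system of pairwise edge-disjoint `st`-paths. -/
def STPathDisjoint (G : Multigraph V E) {s t : V} (P : Set (G.STPath s t)) : Prop :=
  ∀ p ∈ P, ∀ q ∈ P, p ≠ q → ∀ e, e ∈ p.walk.edges → e ∉ q.walk.edges

/-- A nontrivial path starting at `s`. -/
structure SPath (G : Multigraph V E) (s : V) : Type (max u v) where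
  last : V
  walk : G.Walk s last
  support_nodup : walk.support.Nodup
  edges_ne_nil : walk.edges ≠ []

/-- A system of pairwise edge-disjoint paths starting at `s`. -/
def SPathDisjoint (G : Multigraph V E) {s : V} (W : Set (G.SPath s)) : Prop :=
  ∀ p ∈ W, ∀ q ∈ W, p ≠ q → ∀ e, e ∈ p.walk.edges → e ∉ q.walk.edges

/-- The set of last edges of a system of paths starting at `s`. -/
def lastEdges (G : Multigraph V E) {s : V} (W : Set (G.SPath s)) : Set E :=
  {e | ∃ p ∈ W, p.walk.edges.getLast? = some e}

/-- `C` is a cut separating `A` from `B`. -/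
def SepCut (G : Multigraph V E) (A B : Set V) (C : Set E) : Prop :=
  ∃ X : Set V, A ⊆ X ∧ (∀ b ∈ B, b ∉ X) ∧ C = G.cut X

/-- `C` is a `⊆`-minimal cut separating `A` from `B`. -/
def IsMinSepCut (G : Multigraph V E) (A B : Set V) (C : Set E) : Prop :=
  G.SepCut A B C ∧ ∀ D : Set E, G.SepCut A B D → D ⊆ C → D = C

/-- An `s`-`B`-wave: a system of pairwise edge-disjoint paths starting at `s`
whose set of last edges is a `⊆`-minimal cut separating `s` from `B`. -/
def IsWave (G : Multigraph V E) (s : V) (B : Set V) (W : Set (G.SPath s)) : Prop :=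
  G.SPathDisjoint W ∧ G.IsMinSepCut {s} B (G.lastEdges W)

/-- An Erdős–Menger `st`-cut: an `st`-cut which is orthogonal to some system of
pairwise edge-disjoint `st`-paths, i.e. it consists of exactly one edge chosen
from each path of the system. -/
def IsEMCut (G : Multigraph V E) (s t : V) (C : Set E) : Prop :=
  (∃ X : Set V, s ∈ X ∧ t ∉ X ∧ C = G.cut X) ∧
  ∃ P : Set (G.STPath s t), G.STPathDisjoint P ∧
    (∀ p ∈ P, ∃! e, e ∈ C ∧ e ∈ p.walk.edges) ∧
    (∀ e ∈ C, ∃ p ∈ P, e ∈ p.walk.edges)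

/-- The order `≼` on `st`-cuts: the `s`-side of `C` is contained in the
`s`-side of `D` (in a connected graph the `s`-side is unique). -/
def CutLE (G : Multigraph V E) (s t : V) (C D : Set E) : Prop :=
  ∃ X Y : Set V, s ∈ X ∧ t ∉ X ∧ C = G.cut X ∧ s ∈ Y ∧ t ∉ Y ∧ D = G.cut Y ∧ X ⊆ Y

/-- A cut of the form `C_W` for some `st`-wave `W`. -/
def IsWaveCut (G : Multigraph V E) (s t : V) (C : Set E) : Prop :=
  ∃ W : Set (G.SPath s), G.IsWave s {t} W ∧ G.lastEdges W = C

/-- Deletion of a set of edges. -/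
def deleteEdges (G : Multigraph V E) (F : Set E) : Multigraph V {e : E // e ∉ F} where
  inc e := G.inc e.1
  not_isDiag e := G.not_isDiag e.1

open Classical in
/-- Contraction of the vertex set `X` to the vertex `s` (edges inside `X` are
deleted, edges leaving `X` are redirected to `s`). -/
noncomputable def contract (G : Multigraph V E) (X : Set V) (s : V) :
    Multigraph V {e : E // ¬ (Sym2.map (fun v => if v ∈ X then s else v) (G.inc e)).IsDiag} where
  inc e := Sym2.map (fun v => if v ∈ X then s else v) (G.inc e.1)
  not_isDiag e := e.2

/-- Reachability inside a set `S` of vertices. -/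
def ReachableIn (G : Multigraph V E) (S : Set V) (x y : V) : Prop :=
  ∃ p : G.Walk x y, ∀ z ∈ p.support, z ∈ S

/-- `Y` is (the vertex set of) a connected component of the subgraph of `G`
induced by `S`. -/
def IsComponentOf (G : Multigraph V E) (Y S : Set V) : Prop :=
  Y.Nonempty ∧ Y ⊆ S ∧ ∀ x ∈ Y, ∀ y ∈ S, (G.ReachableIn S x y ↔ y ∈ Y)

/-- A cycle in a multigraph (a closed walk with distinct edges whose
vertices are distinct except that the first one equals the last one). -/
structure Cycle (G : Multigraph V E) : Type (max u v) where
  base : V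
  walk : G.Walk base base
  edges_ne_nil : walk.edges ≠ []
  edges_nodup : walk.edges.Nodup
  support_tail_nodup : walk.support.tail.Nodup

/-- A graph is Eulerian if its edge set can be partitioned into
edge sets of cycles. -/
def IsEulerian (G : Multigraph V E) : Prop :=
  ∃ C : Set G.Cycle,
    (∀ c ∈ C, ∀ d ∈ C, c ≠ d → ∀ e, e ∈ c.walk.edges → e ∉ d.walk.edges) ∧
    ∀ e : E, ∃ c ∈ C, e ∈ c.walk.edges

/-- A `T`-partition: a family `{A t : t ∈ T}` of pairwise disjoint vertex sets
with `A t ∩ T = {t}`. -/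
def IsTPartition (T : Set V) (A : V → Set V) : Prop :=
  (∀ t ∈ T, A t ∩ T = {t}) ∧
  ∀ t₁ ∈ T, ∀ t₂ ∈ T, t₁ ≠ t₂ → Disjoint (A t₁) (A t₂)

end Multigraph

/-!
A walk crosses the cut `δ(X)` an even number of times exactly when its two ends lie on the same
side of `X`. The ends of a `T`-path lie in `T`, hence outside any `X ⊆ V ∖ T`, so the path meets
`δ_G(X)` in an even number of edges; deleting them does not change the parity of the cut.
-/

lemma List.Nodup.ncard_inter_eq_countP {α : Type*} {l : List α} (hl : l.Nodup) (S : Set α)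
    [DecidablePred (· ∈ S)] :
    (S ∩ {e | e ∈ l}).ncard = l.countP (fun e => decide (e ∈ S)) := by
  classical
  have : S ∩ {e | e ∈ l} = ↑(l.filter (fun e => decide (e ∈ S))).toFinset := by
    ext e
    simp [and_comm]
  rw [this, Set.ncard_coe_finset, List.toFinset_card_of_nodup (hl.filter _),
    List.countP_eq_length_filter]

namespace Multigraph

variable {V : Type u} {E : Type v} {G : Multigraph V E}

lemma mem_cut_iff {X : Set V} {e : E} {u v : V} (he : G.inc e = s(u, v)) :
    e ∈ G.cut X ↔ (u ∈ X ↔ v ∉ X) := by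
  constructor
  · rintro ⟨x, y, hxy, hx, hy⟩
    rw [he, Sym2.eq_iff] at hxy
    rcases hxy with ⟨rfl, rfl⟩ | ⟨rfl, rfl⟩ <;> tauto
  · intro h
    by_cases hu : u ∈ X
    · exact ⟨u, v, he, hu, h.1 hu⟩
    · exact ⟨v, u, he.trans Sym2.eq_swap, by tauto, hu⟩

lemma deleteEdges_cut_image (F : Set E) (X : Set V) :
    Subtype.val '' ((G.deleteEdges F).cut X) = G.cut X \ F := by
  ext e
  constructor
  · rintro ⟨⟨e, heF⟩, ⟨x, y, hxy, hx, hy⟩, rfl⟩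
    exact ⟨⟨x, y, hxy, hx, hy⟩, heF⟩
  · rintro ⟨⟨x, y, hxy, hx, hy⟩, heF⟩
    exact ⟨⟨e, heF⟩, ⟨x, y, hxy, hx, hy⟩, rfl⟩

lemma ncard_cut_deleteEdges (F : Set E) (X : Set V) :
    ((G.deleteEdges F).cut X).ncard = (G.cut X \ F).ncard := by
  rw [← deleteEdges_cut_image, Set.ncard_image_of_injective _ Subtype.val_injective]

lemma odd_ncard_cut_of_deleteEdges {F : Set E} {X : Set V} (hF : F.Finite)
    (hFX : Even (G.cut X ∩ F).ncard)
    (h : ((G.deleteEdges F).cut X).Finite ∧ Odd ((G.deleteEdges F).cut X).ncard) :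
    (G.cut X).Finite ∧ Odd (G.cut X).ncard := by
  obtain ⟨hfin, hodd⟩ := h
  rw [← Set.finite_image_iff Subtype.val_injective.injOn, deleteEdges_cut_image] at hfin
  rw [ncard_cut_deleteEdges] at hodd
  have hfinG : (G.cut X).Finite := hfin.of_sdiff hF
  refine ⟨hfinG, ?_⟩
  rw [← Set.ncard_inter_add_ncard_sdiff_eq_ncard _ F hfinG]
  exact hFX.add_odd hodd

namespace Walk

lemma start_mem_support : ∀ {u w : V} (p : G.Walk u w), u ∈ p.support
  | _, _, .nil _ => List.mem_singleton_self _
  | _, _, .cons _ _ _ => List.mem_cons_self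

lemma mem_support_of_mem_edges :
    ∀ {u w : V} (p : G.Walk u w) {f : E} {x : V}, f ∈ p.edges → x ∈ G.inc f → x ∈ p.support
  | _, _, .nil _, _, _, hf, _ => by simp [edges] at hf
  | _, _, .cons e he q, f, x, hf, hx => by
    rcases List.mem_cons.1 hf with rfl | hf
    · rw [he, Sym2.mem_iff] at hx
      rcases hx with rfl | rfl
      · exact List.mem_cons_self
      · exact List.mem_cons_of_mem _ q.start_mem_support
    · exact List.mem_cons_of_mem _ (q.mem_support_of_mem_edges hf hx)

lemma edges_nodup_of_support_nodup :
    ∀ {u w : V} (p : G.Walk u w), p.support.Nodup → p.edges.Nodup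
  | _, _, .nil _, _ => List.nodup_nil
  | u, _, .cons e he q, h => by
    rw [support, List.nodup_cons] at h
    refine List.nodup_cons.2 ⟨fun hmem => h.1 ?_, q.edges_nodup_of_support_nodup h.2⟩
    exact q.mem_support_of_mem_edges hmem (by rw [he]; exact Sym2.mem_mk_left u _)

open Classical in
lemma even_countP_cut_iff (X : Set V) :
    ∀ {u w : V} (p : G.Walk u w),
      Even (p.edges.countP (fun e => decide (e ∈ G.cut X))) ↔ (u ∈ X ↔ w ∈ X)
  | _, _, .nil _ => by simp [edges]
  | u, w, .cons (v := v) e he q => by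
    have ih := q.even_countP_cut_iff X
    have hcut := mem_cut_iff (X := X) he
    rw [edges, List.countP_cons]
    by_cases hec : e ∈ G.cut X
    · simp only [hec, decide_true, if_true, Nat.even_add_one, ih]
      tauto
    · simp only [hec, decide_false, Bool.false_eq_true, if_false, add_zero, ih]
      tauto

end Walk

lemma TPath.even_ncard_cut_inter_edges {T X : Set V} (P : G.TPath T) (hX : X ⊆ Tᶜ) :
    Even (G.cut X ∩ {e | e ∈ P.walk.edges}).ncard := by
  classical
  rw [(P.walk.edges_nodup_of_support_nodup P.support_nodup).ncard_inter_eq_countP,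
    Walk.even_countP_cut_iff]
  exact iff_of_false (fun h => hX h P.first_mem) (fun h => hX h P.last_mem)

end Multigraph

/-- Deleting the edges of a `T`-path preserves the property that no
`X ⊆ V ∖ T` has odd finite cut. -/
theorem delete_TPath_preserves_innerEulerian {V : Type u} {E : Type v}
    (G : Multigraph V E) (T : Set V)
    (hEul : ∀ X : Set V, X ⊆ Tᶜ → ¬ ((G.cut X).Finite ∧ Odd (G.cut X).ncard))
    (P : G.TPath T) :
    ∀ X : Set V, X ⊆ Tᶜ →
      ¬ (((G.deleteEdges {e | e ∈ P.walk.edges}).cut X).Finite ∧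
        Odd ((G.deleteEdges {e | e ∈ P.walk.edges}).cut X).ncard) := fun X hX h =>
  hEul X hX <| Multigraph.odd_ncard_cut_of_deleteEdges P.walk.edges.finite_toSet
    (P.even_ncard_cut_inter_edges hX) h
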